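/- arXiv:1204.0095 — 3 statements merged into one kernel-verified Lean document; each statement's English description precedes it below -/
import Mathlib

section
/- A finitely generated periodic subgroup G ⊆ GL(k,ℂ) is finite. -/
/-!
The entries of the generators of `G` and of their inverses generate a finitely generated ring
`R ⊆ ℂ`, and `G ⊆ GL_k(R)`. Since `ℤ` is a Jacobson ring, every residue field of `R` at a maximal
ideal is finite; as `R` has characteristic zero, we may pick two of them, `F₁` of characteristic
`q` and `F₂` in which `q` is invertible. Reduction `GL_k(R) → GL_k(F₁) × GL_k(F₂)` is injective
on elements of finite order: if `g ^ p = 1` and `g ↦ 1` in a field where `p ≠ 0`, then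
`B = 1 + g + ⋯ + g ^ (p - 1)` kills `g - 1` and reduces to `p • 1`, so `det B ≠ 0` and `g = 1`;
writing the order of `g` as `q ^ e * m` with `q ∤ m`, `F₁` disposes of `m` and `F₂` of `q ^ e`.
So `G` embeds into a finite group.
-/

open Matrix

universe u

instance Int.isJacobsonRing : IsJacobsonRing ℤ := by
  refine isJacobsonRing_iff_prime_eq.mpr fun P _ => ?_
  obtain rfl | hP0 := eq_or_ne P ⊥
  · refine le_antisymm (fun x hx => ?_) Ideal.le_jacobson
    rcases Int.isUnit_iff.mp (Ideal.mem_jacobson_bot.mp hx x) with h | h <;>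
      simp [show x = 0 by nlinarith]
  · have := IsPrime.to_maximal_ideal hP0
    exact Ideal.jacobson_eq_self_of_isMaximal

-- `[Algebra ℤ K]` is a binder (all such structures agree) so that subalgebra instances match.
theorem finite_of_finiteType_int (K : Type*) [Field K] [Algebra ℤ K] [Algebra.FiniteType ℤ K] :
    Finite K := by
  obtain rfl := Subsingleton.elim ‹Algebra ℤ K› (Ring.toIntAlgebra K)
  have : Module.Finite ℤ K := finite_of_finite_type_of_isJacobsonRing ℤ K
  obtain ⟨p, hp⟩ := CharP.exists K
  rcases CharP.char_is_prime_or_zero K p with hprime | rfl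
  · refine Module.finite_of_fg_torsion K fun x =>
      ⟨⟨p, mem_nonZeroDivisors_of_ne_zero (by exact_mod_cast hprime.ne_zero)⟩, ?_⟩
    simp [zsmul_eq_mul]
  · have : CharZero K := CharP.charP_to_charZero K
    exact (Int.not_isField
      (isField_of_isIntegral_of_isField (algebraMap ℤ K).injective_int (Field.toIsField K))).elim

theorem Ideal.finite_quotient_of_isMaximal {R : Type*} [CommRing R] [Algebra ℤ R]
    [Algebra.FiniteType ℤ R] (m : Ideal R) [m.IsMaximal] : Finite (R ⧸ m) :=
  @finite_of_finiteType_int _ (Ideal.Quotient.field m) _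
    (.of_surjective (Ideal.Quotient.mkₐ ℤ m) (Ideal.Quotient.mkₐ_surjective ℤ m))

theorem exists_ringHom_finite_field_natCast_ne_zero {R : Type u} [CommRing R] [Algebra ℤ R]
    [Algebra.FiniteType ℤ R] {q : ℕ} (hq : ¬IsNilpotent (q : R)) :
    ∃ (F : Type u) (_ : Field F) (_ : Finite F) (_ : R →+* F), (q : F) ≠ 0 := by
  have : Nontrivial (Localization.Away (q : R)) := OreLocalization.nontrivial_iff.mpr hq
  obtain ⟨m, hm⟩ := Ideal.exists_maximal (Localization.Away (q : R))
  refine ⟨_ ⧸ m, Ideal.Quotient.field m, m.finite_quotient_of_isMaximal,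
    (Ideal.Quotient.mk m).comp (algebraMap R _), ?_⟩
  have hunit : IsUnit (algebraMap R (Localization.Away (q : R)) q) :=
    IsLocalization.Away.algebraMap_isUnit _
  simpa using (hunit.map (Ideal.Quotient.mk m)).ne_zero

theorem Units.mem_range_map_of_mem_range {M N : Type*} [Monoid M] [Monoid N] {f : M →* N}
    (hf : Function.Injective f) {u : Nˣ} (hu : (u : N) ∈ Set.range f)
    (hu' : ((u⁻¹ : Nˣ) : N) ∈ Set.range f) : u ∈ (Units.map f).range := by
  obtain ⟨a, ha⟩ := hu
  obtain ⟨b, hb⟩ := hu'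
  exact ⟨⟨a, b, hf (by simp [ha, hb]), hf (by simp [ha, hb])⟩, Units.ext ha⟩

section

variable {n R : Type*} [Fintype n] [DecidableEq n] [CommRing R]

theorem Matrix.eq_one_of_pow_eq_one_of_map_eq_one [IsDomain R] {F : Type*} [CommRing F]
    [NoZeroDivisors F] (π : R →+* F) {A : Matrix n n R} {p : ℕ} (hA : A ^ p = 1)
    (hπA : π.mapMatrix A = 1) (hp : (p : F) ≠ 0) : A = 1 := by
  set B := ∑ i ∈ Finset.range p, A ^ i
  have hπB : π.mapMatrix B = (p : F) • (1 : Matrix n n F) := by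
    simp only [B, map_sum, map_pow, hπA, one_pow, Finset.sum_const, Finset.card_range,
      Nat.cast_smul_eq_nsmul]
  have hB : B.det ≠ 0 := by
    intro h
    have := congrArg π h
    rw [RingHom.map_det, hπB, map_zero, det_smul, det_one, mul_one] at this
    exact pow_ne_zero _ hp this
  have hBA : B * (A - 1) = 0 := by rw [geom_sum_mul, hA, sub_self]
  have : B.det • (A - 1) = 0 := by
    rw [← one_mul (A - 1), ← smul_mul_assoc, ← adjugate_mul, mul_assoc, hBA, mul_zero]
  exact sub_eq_zero.mp ((smul_eq_zero.mp this).resolve_left hB)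

namespace Matrix.GeneralLinearGroup

theorem map_injective {S : Type*} [CommRing S] {f : R →+* S} (hf : Function.Injective f) :
    Function.Injective (map (n := n) f) :=
  fun _ _ h => Units.ext <| Matrix.map_injective hf (congrArg Units.val h)

theorem exists_fg_le_range_map (G : Subgroup (GL n R)) (hG : G.FG) :
    ∃ R₀ : Subalgebra ℤ R, R₀.FG ∧ G ≤ (map (n := n) (R₀.val : R₀ →+* R)).range := by
  obtain ⟨S, rfl⟩ := hG
  let entries : Set R := ⋃ s ∈ (S : Set (GL n R)), Set.range (fun ij : n × n => s ij.1 ij.2) ∪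
    Set.range (fun ij : n × n => s⁻¹ ij.1 ij.2)
  have hentries : entries.Finite :=
    S.finite_toSet.biUnion fun _ _ => (Set.finite_range _).union (Set.finite_range _)
  set R₀ := Algebra.adjoin ℤ entries
  refine ⟨R₀, Subalgebra.fg_def.mpr ⟨entries, hentries, rfl⟩, ?_⟩
  have hmem (M : Matrix n n R) (hM : ∀ i j, M i j ∈ entries) :
      M ∈ Set.range (RingHom.mapMatrix (R₀.val : R₀ →+* R)) :=
    ⟨Matrix.of fun i j => (⟨M i j, Algebra.subset_adjoin (hM i j)⟩ : R₀), rfl⟩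
  refine (Subgroup.closure_le _).mpr fun s hs => Units.mem_range_map_of_mem_range
    (Matrix.map_injective Subtype.val_injective) (hmem _ fun i j => ?_) (hmem _ fun i j => ?_)
  · exact Set.mem_biUnion hs (Or.inl ⟨(i, j), rfl⟩)
  · exact Set.mem_biUnion hs (Or.inr ⟨(i, j), rfl⟩)

variable [IsDomain R]

theorem eq_one_of_pow_eq_one_of_map_eq_one {F : Type*} [CommRing F] [NoZeroDivisors F]
    (π : R →+* F) {g : GL n R} {p : ℕ} (hg : g ^ p = 1) (hπg : map π g = 1)
    (hp : (p : F) ≠ 0) : g = 1 :=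
  Units.ext <| Matrix.eq_one_of_pow_eq_one_of_map_eq_one π (by simpa using congrArg Units.val hg)
    (by simpa using congrArg Units.val hπg) hp

theorem eq_one_of_isOfFinOrder_of_map_eq_one {F₁ F₂ : Type*} [CommRing F₁] [IsDomain F₁]
    [CommRing F₂] [NoZeroDivisors F₂] (π₁ : R →+* F₁) (π₂ : R →+* F₂) {q : ℕ} [CharP F₁ q]
    (hq : (q : F₂) ≠ 0) {g : GL n R} (hg : IsOfFinOrder g) (hπ₁g : map π₁ g = 1)
    (hπ₂g : map π₂ g = 1) : g = 1 := by
  obtain ⟨e, m, hqm, hm⟩ :=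
    Nat.exists_eq_pow_mul_and_not_dvd hg.orderOf_pos.ne' q (CharP.char_ne_one F₁ q)
  have hgqe : g ^ q ^ e = 1 := by
    refine eq_one_of_pow_eq_one_of_map_eq_one π₁ (p := m) ?_ (by rw [map_pow, hπ₁g, one_pow]) ?_
    · rw [← pow_mul, ← hm, pow_orderOf_eq_one]
    · exact_mod_cast (CharP.cast_eq_zero_iff F₁ q m).not.mpr hqm
  exact eq_one_of_pow_eq_one_of_map_eq_one π₂ hgqe hπ₂g (by exact_mod_cast pow_ne_zero e hq)

theorem finite_of_forall_isOfFinOrder [CharZero R] [Algebra ℤ R] [Algebra.FiniteType ℤ R]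
    (H : Subgroup (GL n R)) (hH : ∀ g ∈ H, IsOfFinOrder g) : Finite H := by
  obtain ⟨F₁, _, _, π₁, -⟩ := exists_ringHom_finite_field_natCast_ne_zero (R := R) (q := 1)
    (by simp)
  obtain ⟨q, hq⟩ := CharP.exists F₁
  obtain ⟨F₂, _, _, π₂, hq₂⟩ := exists_ringHom_finite_field_natCast_ne_zero (R := R) (q := q)
    (by simpa using CharP.char_ne_zero_of_finite F₁ q)
  let φ : H →* GL n F₁ × GL n F₂ := ((map π₁).prod (map π₂)).comp H.subtype
  refine Finite.of_injective φ ((injective_iff_map_eq_one φ).mpr fun g hg => ?_)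
  obtain ⟨hg₁, hg₂⟩ := Prod.ext_iff.mp hg
  exact Subtype.ext (eq_one_of_isOfFinOrder_of_map_eq_one π₁ π₂ hq₂ (hH g g.2) hg₁ hg₂)

end Matrix.GeneralLinearGroup

end

/-- **Schur (1911).** A finitely generated periodic subgroup `G ⊆ GL(k,ℂ)` is finite. -/
theorem schur_linear_group_finite_of_fg_periodic (k : ℕ)
    (G : Subgroup (Matrix.GeneralLinearGroup (Fin k) ℂ))
    (hfg : G.FG) (hper : ∀ g ∈ G, ∃ n, 1 ≤ n ∧ g ^ n = 1) :
    Finite G := by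
  obtain ⟨R, hRfg, hGR⟩ := Matrix.GeneralLinearGroup.exists_fg_le_range_map G hfg
  have : Algebra.FiniteType ℤ R := R.fg_iff_finiteType.mp hRfg
  set ι := Matrix.GeneralLinearGroup.map (n := Fin k) (R.val : R →+* ℂ)
  have hι : Function.Injective ι := Matrix.GeneralLinearGroup.map_injective Subtype.val_injective
  have hH : ∀ g ∈ G.comap ι, IsOfFinOrder g := fun g hg => by
    obtain ⟨n, hn, hgn⟩ := hper _ hg
    exact hι.isOfFinOrder_iff.mp (isOfFinOrder_iff_pow_eq_one.mpr ⟨n, hn, hgn⟩)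
  have := Matrix.GeneralLinearGroup.finite_of_forall_isOfFinOrder (G.comap ι) hH
  rw [← Subgroup.map_comap_eq_self hGR]
  exact Finite.of_equiv _ ((G.comap ι).equivMapOfInjective ι hι).toEquiv
end

section
/- A subgroup G of germs at 0 of holomorphic diffeomorphisms of ℂᵏ of finite exponent is finite. -/
open Filter MeasureTheory Set Function

/-- The germ at `0 ∈ ℂᵏ` of a map `ℂᵏ → ℂᵏ`. -/
noncomputable def germ0 (k : ℕ) (f : (Fin k → ℂ) → (Fin k → ℂ)) :
    Filter.Germ (nhds (0 : Fin k → ℂ)) (Fin k → ℂ) :=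
  Filter.Germ.ofFun f

/-- `g` is the germ at `0` of a holomorphic diffeomorphism of `(ℂᵏ, 0)`,
i.e. of a biholomorphism between neighborhoods of `0` fixing `0`. -/
def IsHolDiffGerm (k : ℕ) (g : Filter.Germ (nhds (0 : Fin k → ℂ)) (Fin k → ℂ)) : Prop :=
  ∃ f finv : (Fin k → ℂ) → (Fin k → ℂ),
    g = germ0 k f ∧ AnalyticAt ℂ f 0 ∧ f 0 = 0 ∧ AnalyticAt ℂ finv 0 ∧ finv 0 = 0 ∧
    (∀ᶠ x in nhds (0 : Fin k → ℂ), finv (f x) = x) ∧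
    (∀ᶠ x in nhds (0 : Fin k → ℂ), f (finv x) = x)

/-- `S` is a subgroup of the group `Diff(ℂᵏ,0)` of germs at `0` of holomorphic
diffeomorphisms fixing `0`: it consists of such germs, contains the identity germ,
and is closed under composition and inversion. -/
structure IsGermDiffSubgroup (k : ℕ)
    (S : Set (Filter.Germ (nhds (0 : Fin k → ℂ)) (Fin k → ℂ))) : Prop where
  id_mem : germ0 k id ∈ S
  holo : ∀ g ∈ S, IsHolDiffGerm k g
  comp_mem : ∀ f g : (Fin k → ℂ) → (Fin k → ℂ),
    germ0 k f ∈ S → germ0 k g ∈ S → germ0 k (f ∘ g) ∈ S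
  inv_mem : ∀ f finv : (Fin k → ℂ) → (Fin k → ℂ), germ0 k f ∈ S →
    (∀ᶠ x in nhds (0 : Fin k → ℂ), finv (f x) = x) →
    (∀ᶠ x in nhds (0 : Fin k → ℂ), f (finv x) = x) → germ0 k finv ∈ S

/-!
The derivative at `0` is multiplicative on `S`, so it maps `S` onto a monoid of `k × k` matrices
of exponent `m`. It is injective on `S`: if `f` and `g` have the same derivative, then
`h = f ∘ g⁻¹ ∈ S` is tangent to the identity with `h^[m] = id`, and the average
`L = (1/m) ∑_{j<m} h^[j]` is a local diffeomorphism satisfying `L ∘ h = L`, so `h = id`.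
Burnside's argument shows the matrix monoid is finite: traces of matrices of exponent `m` are
sums of `k` roots of unity, hence lie in a finite set, and an element `A` of the monoid is
determined by the finitely many traces `tr (A B)`, `B` running over a basis of its linear span.
-/

open Polynomial

namespace Matrix

variable {K n : Type*} [Field K] [Fintype n] [DecidableEq n] {m : ℕ}

theorem eq_one_of_isIdempotentElem_of_trace_eq [CharZero K] {P : Matrix n n K}
    (hP : IsIdempotentElem P) (htr : P.trace = Fintype.card n) : P = 1 := by
  have hidem : IsIdempotentElem (toLin' (1 - P)) := hP.one_sub.map toLinAlgEquiv'
  have htr0 : LinearMap.trace K _ (toLin' (1 - P)) = 0 := by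
    rw [trace_toLin'_eq, trace_sub, trace_one, htr, sub_self]
  exact (sub_eq_zero.mp (toLin'.map_eq_zero_iff.mp
    (LinearMap.IsIdempotentElem.eq_zero_of_trace_eq_zero hidem htr0))).symm

theorem eq_one_of_pow_eq_one_of_trace_pow_eq [CharZero K] {A : Matrix n n K} (hm : m ≠ 0)
    (hA : A ^ m = 1) (htr : ∀ i, (A ^ i).trace = Fintype.card n) : A = 1 := by
  set S := ∑ i ∈ Finset.range m, A ^ i
  have hAS : A * S = S := by
    have hgeom := mul_geom_sum A m
    rwa [hA, sub_self, sub_mul, one_mul, sub_eq_zero] at hgeom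
  have hpowS : ∀ i, A ^ i * S = S := by
    intro i
    induction i with
    | zero => rw [pow_zero, one_mul]
    | succ i ih => rw [pow_succ', mul_assoc, ih, hAS]
  have hmK : (m : K) ≠ 0 := Nat.cast_ne_zero.mpr hm
  set P := (m : K)⁻¹ • S
  have hP : IsIdempotentElem P := by
    have hSS : S * S = (m : K) • S := by
      rw [Finset.sum_mul, Finset.sum_congr rfl fun i _ => hpowS i, Finset.sum_const,
        Finset.card_range, Nat.cast_smul_eq_nsmul]
    rw [IsIdempotentElem, smul_mul_smul_comm, hSS, smul_smul, mul_assoc, inv_mul_cancel₀ hmK,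
      mul_one]
  have hPtr : P.trace = Fintype.card n := by
    rw [trace_smul, trace_sum, Finset.sum_congr rfl fun i _ => htr i, Finset.sum_const,
      Finset.card_range, nsmul_eq_mul, smul_eq_mul, ← mul_assoc, inv_mul_cancel₀ hmK, one_mul]
  have hP1 := eq_one_of_isIdempotentElem_of_trace_eq hP hPtr
  calc A = A * P := by rw [hP1, mul_one]
    _ = P := by rw [mul_smul_comm, hAS]
    _ = 1 := hP1

theorem pow_eq_one_of_isRoot_charpoly {A : Matrix n n K} (hA : A ^ m = 1) {μ : K}
    (hμ : A.charpoly.IsRoot μ) : μ ^ m = 1 := by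
  have hμm := spectrum.pow_mem_pow A m (mem_spectrum_of_isRoot_charpoly hμ)
  rcases subsingleton_or_nontrivial (Matrix n n K) with _ | _
  · simp [spectrum.of_subsingleton] at hμm
  · rwa [hA, spectrum.one_eq, Set.mem_singleton_iff] at hμm

theorem finite_trace_of_pow_eq_one [IsAlgClosed K] (hm : m ≠ 0) :
    (trace '' {A : Matrix n n K | A ^ m = 1}).Finite := by
  classical
  refine ((Fintype.card n • nthRoots m (1 : K)).powerset.map Multiset.sum).toFinset.finite_toSet
    |>.subset ?_
  rintro - ⟨A, hA, rfl⟩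
  simp only [Finset.mem_coe, Multiset.mem_toFinset, Multiset.mem_map, Multiset.mem_powerset]
  refine ⟨A.charpoly.roots, Multiset.le_iff_count.mpr fun μ => ?_,
    (trace_eq_sum_roots_charpoly A).symm⟩
  by_cases hμ : μ ∈ A.charpoly.roots
  · have hroot : μ ∈ nthRoots m (1 : K) :=
      (mem_nthRoots (Nat.pos_of_ne_zero hm)).mpr
        (pow_eq_one_of_isRoot_charpoly hA (isRoot_of_mem_roots hμ))
    calc Multiset.count μ A.charpoly.roots ≤ A.charpoly.roots.card := Multiset.count_le_card _ _
      _ = Fintype.card n * 1 := by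
        rw [IsAlgClosed.card_roots_eq_natDegree, charpoly_natDegree_eq_dim, mul_one]
      _ ≤ Multiset.count μ (Fintype.card n • nthRoots m (1 : K)) := by
        rw [Multiset.count_nsmul]
        exact Nat.mul_le_mul_left _ (Multiset.count_pos.mpr hroot)
  · simp [Multiset.count_eq_zero.mpr hμ]

theorem eq_of_forall_trace_mul_eq [CharZero K] (T : Submonoid (Matrix n n K)) (hm : m ≠ 0)
    (hT : ∀ A ∈ T, A ^ m = 1) {A B : Matrix n n K} (hA : A ∈ T) (hB : B ∈ T)
    (h : ∀ H ∈ T, (A * H).trace = (B * H).trace) : A = B := by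
  set u := B * A ^ (m - 1)
  have hu : u ∈ T := T.mul_mem hB (T.pow_mem hA _)
  have htr : ∀ i, (u ^ i).trace = Fintype.card n := by
    intro i
    induction i with
    | zero => rw [pow_zero, trace_one]
    | succ i ih =>
      calc (u ^ (i + 1)).trace = (B * (A ^ (m - 1) * u ^ i)).trace := by
            rw [pow_succ', mul_assoc]
        _ = (A * (A ^ (m - 1) * u ^ i)).trace :=
            (h _ (T.mul_mem (T.pow_mem hA _) (T.pow_mem hu i))).symm
        _ = (u ^ i).trace := by
            rw [← mul_assoc, ← pow_succ', Nat.sub_add_cancel (Nat.pos_of_ne_zero hm), hT A hA,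
              one_mul]
        _ = Fintype.card n := ih
  have hu1 : u = 1 := eq_one_of_pow_eq_one_of_trace_pow_eq hm (hT u hu) htr
  calc A = u * A := by rw [hu1, one_mul]
    _ = B := by rw [mul_assoc, pow_sub_one_mul hm, hT A hA, mul_one]

theorem finite_submonoid_of_forall_pow_eq_one [CharZero K] [IsAlgClosed K]
    (T : Submonoid (Matrix n n K)) (hm : m ≠ 0) (hT : ∀ A ∈ T, A ^ m = 1) :
    (T : Set (Matrix n n K)).Finite := by
  obtain ⟨s, hsT, hspan, hli⟩ := exists_linearIndependent K (T : Set (Matrix n n K))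
  have : Finite s := hli.setFinite.to_subtype
  let traces : Matrix n n K → s → K := fun A b => (A * b).trace
  refine Set.Finite.of_finite_image (f := traces) ?_ fun A hA B hB hAB => ?_
  · refine (Set.Finite.pi (t := fun _ : s => trace '' {A : Matrix n n K | A ^ m = 1})
      fun _ => finite_trace_of_pow_eq_one hm).subset ?_
    rintro - ⟨A, hA, rfl⟩ b -
    exact ⟨_, hT _ (T.mul_mem hA (hsT b.2)), rfl⟩
  · refine eq_of_forall_trace_mul_eq T hm hT hA hB fun H hH => ?_
    have htraces := LinearMap.eqOn_span (R := K) (s := s)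
      (f := traceLinearMap n K K ∘ₗ LinearMap.mulLeft K A)
      (g := traceLinearMap n K K ∘ₗ LinearMap.mulLeft K B) (fun b hb => congrFun hAB ⟨b, hb⟩)
    exact htraces (hspan ▸ Submodule.subset_span hH)

end Matrix

open scoped Topology

theorem eventuallyEq_id_of_iterate_eventuallyEq_id {𝕜 E : Type*} [NontriviallyNormedField 𝕜]
    [CharZero 𝕜] [NormedAddCommGroup E] [NormedSpace 𝕜 E] [CompleteSpace E] {f : E → E} {x : E}
    {m : ℕ} (hm : m ≠ 0) (hf : HasStrictFDerivAt f (ContinuousLinearMap.id 𝕜 E) x)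
    (hx : f x = x) (hfm : f^[m] =ᶠ[𝓝 x] id) : f =ᶠ[𝓝 x] id := by
  set L : E → E := fun y => (m : 𝕜)⁻¹ • ∑ j ∈ Finset.range m, f^[j] y
  have hL : HasStrictFDerivAt L (ContinuousLinearEquiv.refl 𝕜 E : E →L[𝕜] E) x := by
    have hsum := HasStrictFDerivAt.fun_sum fun j (_ : j ∈ Finset.range m) => hf.iterate hx j
    convert hsum.const_smul (m : 𝕜)⁻¹ using 1
    · rfl
    simp only [ContinuousLinearEquiv.coe_refl, ← ContinuousLinearMap.one_def, one_pow,
      Finset.sum_const, Finset.card_range]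
    rw [← Nat.cast_smul_eq_nsmul 𝕜, smul_smul,
      inv_mul_cancel₀ (Nat.cast_ne_zero.mpr hm), one_smul]
  have hLf : ∀ y, f^[m] y = y → L (f y) = L y := by
    intro y hy
    have hshift := Finset.sum_range_succ' (fun j => f^[j] y) m
    rw [Finset.sum_range_succ, hy, iterate_zero_apply] at hshift
    simp only [L, ← iterate_succ_apply, add_right_cancel hshift]
  have hfx : Tendsto f (𝓝 x) (𝓝 x) := by simpa only [hx] using hf.continuousAt.tendsto
  filter_upwards [hfm, hL.eventually_left_inverse, hfx.eventually hL.eventually_left_inverse]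
    with y hy hinv hinvf
  rw [← hinvf, hLf y hy, hinv, id]

noncomputable def germJacobian (k : ℕ) (g : Germ (𝓝 (0 : Fin k → ℂ)) (Fin k → ℂ)) :
    Matrix (Fin k) (Fin k) ℂ :=
  g.liftOn (fun f => LinearMap.toMatrix' (fderiv ℂ f 0 : (Fin k → ℂ) →ₗ[ℂ] Fin k → ℂ))
    fun _ _ h => by dsimp only; rw [h.fderiv_eq]

theorem germJacobian_germ0 {k : ℕ} (f : (Fin k → ℂ) → Fin k → ℂ) :
    germJacobian k (germ0 k f) =
      LinearMap.toMatrix' (fderiv ℂ f 0 : (Fin k → ℂ) →ₗ[ℂ] Fin k → ℂ) := rfl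

theorem germJacobian_germ0_id {k : ℕ} : germJacobian k (germ0 k id) = 1 := by
  rw [germJacobian_germ0, fderiv_id, ContinuousLinearMap.coe_id, LinearMap.toMatrix'_id]

namespace IsGermDiffSubgroup

variable {k : ℕ} {S : Set (Germ (𝓝 (0 : Fin k → ℂ)) (Fin k → ℂ))}

theorem analyticAt (hS : IsGermDiffSubgroup k S) {f : (Fin k → ℂ) → Fin k → ℂ}
    (hf : germ0 k f ∈ S) : AnalyticAt ℂ f 0 := by
  obtain ⟨g, -, hfg, hg, -⟩ := hS.holo _ hf
  exact hg.congr (Germ.coe_eq.mp hfg).symm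

theorem map_zero (hS : IsGermDiffSubgroup k S) {f : (Fin k → ℂ) → Fin k → ℂ}
    (hf : germ0 k f ∈ S) : f 0 = 0 := by
  obtain ⟨g, -, hfg, -, hg0, -⟩ := hS.holo _ hf
  exact (Germ.coe_eq.mp hfg).eq_of_nhds.trans hg0

theorem tendsto_zero (hS : IsGermDiffSubgroup k S) {f : (Fin k → ℂ) → Fin k → ℂ}
    (hf : germ0 k f ∈ S) : Tendsto f (𝓝 0) (𝓝 0) := by
  simpa only [hS.map_zero hf] using (hS.analyticAt hf).continuousAt.tendsto

theorem germJacobian_comp (hS : IsGermDiffSubgroup k S) {f g : (Fin k → ℂ) → Fin k → ℂ}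
    (hf : germ0 k f ∈ S) (hg : germ0 k g ∈ S) :
    germJacobian k (germ0 k (f ∘ g)) =
      germJacobian k (germ0 k f) * germJacobian k (germ0 k g) := by
  have hfg : DifferentiableAt ℂ f (g 0) := by
    rw [hS.map_zero hg]; exact (hS.analyticAt hf).differentiableAt
  rw [germJacobian_germ0, fderiv_comp 0 hfg (hS.analyticAt hg).differentiableAt, hS.map_zero hg]
  exact LinearMap.toMatrix'_comp _ _

theorem iterate_mem (hS : IsGermDiffSubgroup k S) {f : (Fin k → ℂ) → Fin k → ℂ}
    (hf : germ0 k f ∈ S) (n : ℕ) : germ0 k (f^[n]) ∈ S := by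
  induction n with
  | zero => exact hS.id_mem
  | succ n ih => rw [iterate_succ']; exact hS.comp_mem _ _ hf ih

theorem germJacobian_iterate (hS : IsGermDiffSubgroup k S) {f : (Fin k → ℂ) → Fin k → ℂ}
    (hf : germ0 k f ∈ S) (n : ℕ) :
    germJacobian k (germ0 k (f^[n])) = germJacobian k (germ0 k f) ^ n := by
  induction n with
  | zero => exact germJacobian_germ0_id
  | succ n ih => rw [iterate_succ', hS.germJacobian_comp hf (hS.iterate_mem hf n), ih, pow_succ']

theorem germJacobian_pow_eq_one (hS : IsGermDiffSubgroup k S) {m : ℕ}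
    (hexp : ∀ f : (Fin k → ℂ) → (Fin k → ℂ), germ0 k f ∈ S → germ0 k (f^[m]) = germ0 k id)
    {g : Germ (𝓝 (0 : Fin k → ℂ)) (Fin k → ℂ)} (hg : g ∈ S) : germJacobian k g ^ m = 1 := by
  obtain ⟨f, -, rfl, -⟩ := hS.holo g hg
  rw [← hS.germJacobian_iterate hg, hexp f hg, germJacobian_germ0_id]

def jacobianSubmonoid (hS : IsGermDiffSubgroup k S) : Submonoid (Matrix (Fin k) (Fin k) ℂ) where
  carrier := germJacobian k '' S
  one_mem' := ⟨_, hS.id_mem, germJacobian_germ0_id⟩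
  mul_mem' := by
    rintro - - ⟨g₁, hg₁, rfl⟩ ⟨g₂, hg₂, rfl⟩
    obtain ⟨f₁, -, rfl, -⟩ := hS.holo g₁ hg₁
    obtain ⟨f₂, -, rfl, -⟩ := hS.holo g₂ hg₂
    exact ⟨_, hS.comp_mem _ _ hg₁ hg₂, hS.germJacobian_comp hg₁ hg₂⟩

theorem eventuallyEq_id_of_germJacobian_eq_one (hS : IsGermDiffSubgroup k S) {m : ℕ}
    (hm : m ≠ 0)
    (hexp : ∀ f : (Fin k → ℂ) → (Fin k → ℂ), germ0 k f ∈ S → germ0 k (f^[m]) = germ0 k id)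
    {f : (Fin k → ℂ) → Fin k → ℂ} (hf : germ0 k f ∈ S) (h1 : germJacobian k (germ0 k f) = 1) :
    f =ᶠ[𝓝 0] id := by
  have hDf : fderiv ℂ f 0 = ContinuousLinearMap.id ℂ _ := by
    rw [germJacobian_germ0, ← LinearMap.toMatrix'_id, LinearMap.toMatrix'.injective.eq_iff] at h1
    exact ContinuousLinearMap.coe_injective h1
  exact eventuallyEq_id_of_iterate_eventuallyEq_id hm
    (hDf ▸ (hS.analyticAt hf).hasStrictFDerivAt) (hS.map_zero hf)
    (Germ.coe_eq.mp (hexp f hf))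

theorem injOn_germJacobian (hS : IsGermDiffSubgroup k S) {m : ℕ} (hm : m ≠ 0)
    (hexp : ∀ f : (Fin k → ℂ) → (Fin k → ℂ), germ0 k f ∈ S → germ0 k (f^[m]) = germ0 k id) :
    InjOn (germJacobian k) S := by
  intro g₁ hg₁ g₂ hg₂ hD
  obtain ⟨f, -, rfl, -⟩ := hS.holo g₁ hg₁
  obtain ⟨g, ginv, rfl, -, -, -, -, hleft, hright⟩ := hS.holo g₂ hg₂
  have hginv : germ0 k ginv ∈ S := hS.inv_mem g ginv hg₂ hleft hright
  have hgginv : germ0 k (g ∘ ginv) = germ0 k id := Germ.coe_eq.mpr hright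
  have hD1 : germJacobian k (germ0 k (f ∘ ginv)) = 1 := by
    rw [hS.germJacobian_comp hg₁ hginv, hD, ← hS.germJacobian_comp hg₂ hginv, hgginv,
      germJacobian_germ0_id]
  have htangent : f ∘ ginv =ᶠ[𝓝 0] id :=
    hS.eventuallyEq_id_of_germJacobian_eq_one hm hexp (hS.comp_mem _ _ hg₁ hginv) hD1
  refine Germ.coe_eq.mpr ?_
  filter_upwards [hleft, (hS.tendsto_zero hg₂).eventually htangent] with x hx hfx
  rwa [comp_apply, hx] at hfx

end IsGermDiffSubgroup

/-- A (not necessarily finitely generated) subgroup of germs at `0` of holomorphic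
diffeomorphisms of `ℂᵏ` of finite exponent is finite. -/
theorem finite_of_germDiffSubgroup_finiteExponent (k m : ℕ)
    (S : Set (Filter.Germ (nhds (0 : Fin k → ℂ)) (Fin k → ℂ)))
    (hS : IsGermDiffSubgroup k S) (hm : 1 ≤ m)
    (hexp : ∀ f : (Fin k → ℂ) → (Fin k → ℂ), germ0 k f ∈ S →
      germ0 k (f^[m]) = germ0 k id) :
    S.Finite := by
  have hm0 : m ≠ 0 := Nat.one_le_iff_ne_zero.mp hm
  have hfin : (germJacobian k '' S).Finite :=
    Matrix.finite_submonoid_of_forall_pow_eq_one hS.jacobianSubmonoid hm0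
      fun _ ⟨_, hg, hA⟩ => hA ▸ hS.germJacobian_pow_eq_one hexp hg
  exact hfin.of_finite_image (hS.injOn_germJacobian hm0 hexp)
end

section
/- Let g be a holomorphic diffeomorphism germ at 0 ∈ ℂᵏ with a representative defined on a connected open neighborhood W of 0 such that every point x ∈ W is periodic for g (i.e., for each x there is k(x) ∈ ℕ with g^{k(x)}(x) = x, all iterates being defined). Then g has finite order: g^k = Id on W for some k ∈ ℕ. -/
/-! The fixed-point sets of the iterates `g^[n]` are closed in `W` and cover it, so by Baire's
theorem (an open subset of `ℂᵏ` is a Baire space) one of them contains a nonempty open set; the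
identity theorem then propagates `g^[n] = id` to all of the connected set `W`. -/

open Filter Function Set Topology

theorem Function.exists_nonempty_interior_ptsOfPeriod {X : Type*} [TopologicalSpace X]
    [T2Space X] [BaireSpace X] [Nonempty X] {f : X → X} (hf : Continuous f)
    (hper : periodicPts f = univ) : ∃ n : ℕ+, (interior (ptsOfPeriod f n)).Nonempty :=
  nonempty_interior_of_iUnion_of_closed (fun n => isClosed_fixedPoints (hf.iterate n))
    (iUnion_pnat_ptsOfPeriod f ▸ hper)

theorem Set.MapsTo.isPeriodicPt_restrict_iff {α : Type*} {f : α → α} {s : Set α}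
    (h : MapsTo f s s) {n : ℕ} {x : s} :
    IsPeriodicPt (h.restrict f s s) n x ↔ IsPeriodicPt f n x := by
  simp only [IsPeriodicPt, IsFixedPt, h.iterate_restrict, Subtype.ext_iff,
    MapsTo.val_restrict_apply]

theorem IsOpen.exists_eventuallyEq_iterate_id_of_subset_periodicPts {X : Type*}
    [TopologicalSpace X] [T2Space X] [BaireSpace X] {f : X → X} {s : Set X} (hs : IsOpen s)
    (hne : s.Nonempty) (hf : ContinuousOn f s) (hmaps : MapsTo f s s)
    (hper : s ⊆ periodicPts f) : ∃ n > 0, ∃ x ∈ s, f^[n] =ᶠ[𝓝 x] id := by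
  have : BaireSpace s := hs.baireSpace
  have : Nonempty s := hne.to_subtype
  have hper' : periodicPts (hmaps.restrict f s s) = univ := by
    refine eq_univ_of_forall fun x => ?_
    obtain ⟨n, hn, hx⟩ := mem_periodicPts.mp (hper x.2)
    exact mk_mem_periodicPts hn (hmaps.isPeriodicPt_restrict_iff.mpr hx)
  obtain ⟨n, x, hx⟩ :=
    exists_nonempty_interior_ptsOfPeriod (hf.mapsToRestrict hmaps) hper'
  refine ⟨n, n.pos, x, x.2, ?_⟩
  filter_upwards [hs.isOpenMap_subtype_val.image_mem_nhds (mem_interior_iff_mem_nhds.mp hx)]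
  rintro _ ⟨y, hy, rfl⟩
  exact hmaps.isPeriodicPt_restrict_iff.mp hy

theorem AnalyticOnNhd.iterate {𝕜 E : Type*} [NontriviallyNormedField 𝕜] [NormedAddCommGroup E]
    [NormedSpace 𝕜 E] {f : E → E} {s : Set E} (hf : AnalyticOnNhd 𝕜 f s)
    (hmaps : MapsTo f s s) :
    ∀ n, AnalyticOnNhd 𝕜 f^[n] s
  | 0 => analyticOnNhd_id
  | n + 1 => by
    rw [iterate_succ']
    exact hf.comp (hf.iterate hmaps n) (hmaps.iterate n)

theorem exists_iterate_eq_id_of_forall_periodic_general (k : ℕ) (W : Set (Fin k → ℂ))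
    (hWo : IsOpen W) (hWc : IsConnected W)
    (g : (Fin k → ℂ) → (Fin k → ℂ))
    (hg : AnalyticOnNhd ℂ g W) (hmaps : Set.MapsTo g W W)
    (hper : ∀ x ∈ W, ∃ n, 1 ≤ n ∧ g^[n] x = x) :
    ∃ m, 1 ≤ m ∧ ∀ x ∈ W, g^[m] x = x := by
  obtain ⟨n, hn, x, hxW, hx⟩ := hWo.exists_eventuallyEq_iterate_id_of_subset_periodicPts
    hWc.nonempty hg.continuousOn hmaps fun x hx => mem_periodicPts.mpr (hper x hx)
  exact ⟨n, hn, (hg.iterate hmaps n).eqOn_of_preconnected_of_eventuallyEq analyticOnNhd_id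
    hWc.isPreconnected hxW hx⟩

/-- If `g` is a holomorphic injective map of a connected open neighborhood `W` of
`0 ∈ ℂᵏ` into itself, fixing `0`, such that every point of `W` is periodic for `g`,
then `g` has finite order: `g^[k] = id` on `W` for some `k ≥ 1`. -/
theorem exists_iterate_eq_id_of_forall_periodic (k : ℕ) (W : Set (Fin k → ℂ))
    (hWo : IsOpen W) (hWc : IsConnected W) (h0W : (0 : Fin k → ℂ) ∈ W)
    (g : (Fin k → ℂ) → (Fin k → ℂ))
    (hg : AnalyticOnNhd ℂ g W) (hinj : Set.InjOn g W) (hmaps : Set.MapsTo g W W)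
    (hg0 : g 0 = 0)
    (hper : ∀ x ∈ W, ∃ n, 1 ≤ n ∧ g^[n] x = x) :
    ∃ m, 1 ≤ m ∧ ∀ x ∈ W, g^[m] x = x :=
  exists_iterate_eq_id_of_forall_periodic_general k W hWo hWc g hg hmaps hper
end
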